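/- arXiv:1710.06199 — 2 statements merged into one kernel-verified Lean document; each statement's English description precedes it below -/
import Mathlib

section
/- (Lemma B.2(c), connecting neighbouring blocks, stated for a fixed representation in the self-adjoint case) Let A be a unital C*-algebra and u_{ij} ∈ A (1 ≤ i,j ≤ n) be self-adjoint, and suppose the relations R(f) hold for the u_{ij}, where f ∈ P(2,2) is the four-block partition whose unique block contains all four points (equivalently, u_{ki}u_{kj} = 0 and u_{ik}u_{jk} = 0 for all k and all i ≠ j after rotation). Let p ∈ P(k,l) be a partition such that R(p) holds, and let 1 ≤ j ≤ l-1 be such that the j-th and (j+1)-th lower points of p lie in different blocks. Then the relations R(p') hold, where p' is obtained from p by connecting (merging) the blocks of the j-th and (j+1)-th lower points. -/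
/-!
Merging the blocks of the lower points `j` and `j + 1` adds the constraint
`β j = β (j + 1)` to `δ_p`, so the left side of `R(p')` is that of `R(p)` times the
indicator of `β j = β (j + 1)`. The same holds on the right: by `R(f)`,
`u_{bc} u_{b'c'} = 0` as soon as exactly one of `b = b'`, `c = c'` holds, so every term of
the right side in which `γ' j = γ' (j + 1)` and `β j = β (j + 1)` disagree vanishes.
-/

open scoped Classical

namespace PartitionCstar

/-- A partition in `P(k,l)`: an equivalence relation (whose classes are the blocks)
on the disjoint union of `k` upper points and `l` lower points. -/
abbrev Partition (k l : ℕ) := Setoid (Fin k ⊕ Fin l)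

/-- `labelsMatch p α β` holds iff, labelling the upper points by `α` and the lower points
by `β`, the strings (blocks) of `p` connect only equal indices. -/
def labelsMatch {n k l : ℕ} (p : Partition k l) (α : Fin k → Fin n) (β : Fin l → Fin n) :
    Prop :=
  ∀ x y : Fin k ⊕ Fin l, p.r x y → Sum.elim α β x = Sum.elim α β y

/-- The delta function `δ_p(α,β) ∈ {0,1}`. -/
noncomputable def delta {n k l : ℕ} (p : Partition k l) (α : Fin k → Fin n)
    (β : Fin l → Fin n) : ℕ :=
  if labelsMatch p α β then 1 else 0

/-- The relations `R(p)` for a matrix of elements `u` of a unital ring: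
`∑_γ δ_p(γ,β) u_{γ₁α₁}⋯u_{γₖαₖ} = ∑_{γ'} δ_p(α,γ') u_{β₁γ'₁}⋯u_{β_lγ'_l}`.
(For `k = 0` resp. `l = 0` the empty product is `1`, which yields the conventions
`δ_p(∅,β)·1` resp. `δ_p(α,∅)·1`.) -/
def SatisfiesRel {A : Type*} [Ring A] {n : ℕ} (u : Fin n → Fin n → A)
    {k l : ℕ} (p : Partition k l) : Prop :=
  ∀ (α : Fin k → Fin n) (β : Fin l → Fin n),
    (∑ γ : Fin k → Fin n,
      if labelsMatch p γ β then (List.ofFn fun s => u (γ s) (α s)).prod else 0)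
    = ∑ γ' : Fin l → Fin n,
      if labelsMatch p α γ' then (List.ofFn fun t => u (β t) (γ' t)).prod else 0

/-- The disjoint union of two set partitions. -/
def sumPartition {X Y : Type*} (p : Setoid X) (q : Setoid Y) : Setoid (X ⊕ Y) where
  r := Sum.LiftRel p.r q.r
  iseqv := by
    refine ⟨fun a => ?_, fun {a b} h => ?_, fun {a b c} h₁ h₂ => ?_⟩
    · cases a with
      | inl x => exact Sum.LiftRel.inl (p.iseqv.refl x)
      | inr y => exact Sum.LiftRel.inr (q.iseqv.refl y)
    · cases h with
      | inl h => exact Sum.LiftRel.inl (p.iseqv.symm h)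
      | inr h => exact Sum.LiftRel.inr (q.iseqv.symm h)
    · cases h₁ with
      | inl h₁ =>
        cases h₂ with
        | inl h₂ => exact Sum.LiftRel.inl (p.iseqv.trans h₁ h₂)
      | inr h₁ =>
        cases h₂ with
        | inr h₂ => exact Sum.LiftRel.inr (q.iseqv.trans h₁ h₂)

/-- Reindexing equivalence for the tensor product of partitions. -/
def tensorEquiv (k l k' l' : ℕ) :
    (Fin (k + k') ⊕ Fin (l + l')) ≃ ((Fin k ⊕ Fin l) ⊕ (Fin k' ⊕ Fin l')) :=
  (Equiv.sumCongr finSumFinEquiv.symm finSumFinEquiv.symm).trans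
    (Equiv.sumSumSumComm (Fin k) (Fin k') (Fin l) (Fin l'))

/-- The tensor product `p ⊗ q` of two partitions: horizontal concatenation,
blocks kept separate. -/
def tensor {k l k' l' : ℕ} (p : Partition k l) (q : Partition k' l') :
    Partition (k + k') (l + l') :=
  Setoid.comap (tensorEquiv k l k' l') (sumPartition p q)

/-- The join of `p ∈ P(k,l)` and `q ∈ P(l,m)` on the `k` upper, `l` middle and
`m` lower points, identifying the lower points of `p` with the upper points of `q`. -/
def compJoin {k l m : ℕ} (q : Partition l m) (p : Partition k l) :
    Setoid (Fin k ⊕ (Fin l ⊕ Fin m)) :=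
  (Setoid.comap (Equiv.sumAssoc (Fin k) (Fin l) (Fin m)).symm
      (sumPartition p (⊥ : Setoid (Fin m))))
    ⊔ sumPartition (⊥ : Setoid (Fin k)) q

/-- The composition `qp ∈ P(k,m)` of `q ∈ P(l,m)` below `p ∈ P(k,l)`: restriction
of the join to the upper and lower points. -/
def comp {k l m : ℕ} (q : Partition l m) (p : Partition k l) : Partition k m :=
  Setoid.comap (Sum.map id Sum.inr : Fin k ⊕ Fin m → Fin k ⊕ (Fin l ⊕ Fin m))
    (compJoin q p)

/-- Middle points in the composition procedure. -/
def IsMiddle {k l m : ℕ} : Fin k ⊕ (Fin l ⊕ Fin m) → Prop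
  | Sum.inr (Sum.inl _) => True
  | _ => False

/-- `rl q p`: the number of removed loops in the composition of `q` and `p`, i.e. the
number of blocks of the join consisting entirely of middle points. -/
noncomputable def rl {k l m : ℕ} (q : Partition l m) (p : Partition k l) : ℕ :=
  Nat.card {c : Quotient (compJoin q p) //
    ∀ x : Fin k ⊕ (Fin l ⊕ Fin m), Quotient.mk (compJoin q p) x = c → IsMiddle x}

/-- The involution `p* ∈ P(l,k)`: turning `p ∈ P(k,l)` upside down. -/
def involution {k l : ℕ} (p : Partition k l) : Partition l k :=
  Setoid.comap (Equiv.sumComm (Fin l) (Fin k)) p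

/-- The vertical reflection `p̃ ∈ P(k,l)`: reflecting `p` at the vertical axis. -/
def reflect {k l : ℕ} (p : Partition k l) : Partition k l :=
  Setoid.comap (Sum.map Fin.rev Fin.rev) p

/-- The setoid relating `x` and `y` (and nothing else besides equality). -/
def pairSetoid {X : Type*} (x y : X) : Setoid X where
  r a b := a = b ∨ (a = x ∧ b = y) ∨ (a = y ∧ b = x)
  iseqv := by
    refine ⟨fun a => Or.inl rfl, fun {a b} h => ?_, fun {a b c} h₁ h₂ => ?_⟩
    · rcases h with rfl | ⟨ha, hb⟩ | ⟨ha, hb⟩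
      · exact Or.inl rfl
      · exact Or.inr (Or.inr ⟨hb, ha⟩)
      · exact Or.inr (Or.inl ⟨hb, ha⟩)
    · rcases h₁ with rfl | h₁
      · exact h₂
      · rcases h₂ with rfl | h₂
        · exact Or.inr h₁
        · rcases h₁ with ⟨ha, hb⟩ | ⟨ha, hb⟩
          · rcases h₂ with ⟨hb', hc⟩ | ⟨hb', hc⟩
            · exact Or.inr (Or.inl ⟨ha, hc⟩)
            · exact Or.inl (ha.trans hc.symm)
          · rcases h₂ with ⟨hb', hc⟩ | ⟨hb', hc⟩
            · exact Or.inl (ha.trans hc.symm)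
            · exact Or.inr (Or.inr ⟨ha, hc⟩)

/-- Connecting (merging) the blocks of the points `x` and `y` of a partition. -/
def mergeBlocks {X : Type*} (p : Setoid X) (x y : X) : Setoid X :=
  p ⊔ pairSetoid x y

/-- Disconnecting the point `x` from its block and turning it into a singleton block. -/
def disconnect {X : Type*} (p : Setoid X) (x : X) : Setoid X where
  r a b := a = b ∨ (p.r a b ∧ a ≠ x ∧ b ≠ x)
  iseqv := by
    refine ⟨fun a => Or.inl rfl, fun {a b} h => ?_, fun {a b c} h₁ h₂ => ?_⟩
    · rcases h with rfl | ⟨h, ha, hb⟩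
      · exact Or.inl rfl
      · exact Or.inr ⟨p.iseqv.symm h, hb, ha⟩
    · rcases h₁ with rfl | ⟨h₁, ha, hb⟩
      · exact h₂
      · rcases h₂ with rfl | ⟨h₂, hb', hc⟩
        · exact Or.inr ⟨h₁, ha, hb⟩
        · exact Or.inr ⟨p.iseqv.trans h₁ h₂, ha, hc⟩

/-- The partition of the lower points induced by `p ∈ P(0,l)`. -/
def lowerSetoid {l : ℕ} (p : Partition 0 l) : Setoid (Fin l) :=
  Setoid.comap Sum.inr p

/-- The reindexing map for inserting `m` points after position `t` among `l` points. -/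
def insertMap (l m t : ℕ) (ht : t ≤ l) : Fin (l + m) → Fin l ⊕ Fin m := fun i =>
  if h1 : (i : ℕ) < t then Sum.inl ⟨i, lt_of_lt_of_le h1 ht⟩
  else if h2 : (i : ℕ) < t + m then Sum.inr ⟨(i : ℕ) - t, by omega⟩
  else Sum.inl ⟨(i : ℕ) - m, by have := i.isLt; omega⟩

/-- The partition in `P(0, l+m)` obtained from `p ∈ P(0,l)` by inserting `q ∈ P(0,m)`
after the `t`-th lower point of `p` (blocks of `p` and `q` kept separate). -/
def insertAt {l m : ℕ} (p : Partition 0 l) (q : Partition 0 m) (t : ℕ) (ht : t ≤ l) :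
    Partition 0 (l + m) :=
  Setoid.comap (Sum.elim (fun a : Fin 0 => a.elim0) (insertMap l m t ht))
    (sumPartition (lowerSetoid p) (lowerSetoid q))

/-- The reindexing map for the rotation moving the leftmost upper point to the
leftmost lower position. -/
def rotateMap (k l : ℕ) : Fin k ⊕ Fin (l + 1) → Fin (k + 1) ⊕ Fin l
  | Sum.inl a => Sum.inl a.succ
  | Sum.inr b => Fin.cases (Sum.inl (0 : Fin (k + 1))) (fun b' => Sum.inr b') b

/-- The rotated version of `p ∈ P(k+1, l)`: the leftmost upper point becomes the new
leftmost lower point (staying in its block). -/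
def rotate {k l : ℕ} (p : Partition (k + 1) l) : Partition k (l + 1) :=
  Setoid.comap (rotateMap k l) p

/-- The embedding of the remaining points after erasing the lower points `j` and `j+1`. -/
def eraseMap (k l j : ℕ) : Fin k ⊕ Fin l → Fin k ⊕ Fin (l + 2) :=
  Sum.map id fun b =>
    if (b : ℕ) < j then ⟨(b : ℕ), by have := b.isLt; omega⟩
    else ⟨(b : ℕ) + 2, by have := b.isLt; omega⟩

/-- The partition in `P(k,l)` obtained from `p ∈ P(k,l+2)` by connecting the blocks of
the `j`-th and `(j+1)`-th lower points and then erasing those two points. -/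
def erasePair {k l : ℕ} (p : Partition k (l + 2)) (j : Fin (l + 1)) : Partition k l :=
  Setoid.comap (eraseMap k l j)
    (mergeBlocks p (Sum.inr ⟨(j : ℕ), by have := j.isLt; omega⟩)
      (Sum.inr ⟨(j : ℕ) + 1, by have := j.isLt; omega⟩))

/-- The non-unital relations `R(p)` relative to a projection `P₀`:
`P₀·∑_γ δ_p(γ,β) u_{γ₁α₁}⋯u_{γₖαₖ} = (∑_{γ'} δ_p(α,γ') u_{β₁γ'₁}⋯u_{β_lγ'_l})·P₀`,
with the conventions `δ_p(∅,β)·P₀` resp. `δ_p(α,∅)·P₀` for `k = 0` resp. `l = 0`. -/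
def SatisfiesRelNU {A : Type*} [NonUnitalRing A] {n : ℕ} (P₀ : A)
    (u : Fin n → Fin n → A) {k l : ℕ} (p : Partition k l) : Prop :=
  ∀ (α : Fin k → Fin n) (β : Fin l → Fin n),
    (∑ γ : Fin k → Fin n,
      if labelsMatch p γ β then
        (List.ofFn fun s => u (γ s) (α s)).foldl (· * ·) P₀ else 0)
    = ∑ γ' : Fin l → Fin n,
      if labelsMatch p α γ' then
        (List.ofFn fun t => u (β t) (γ' t)).foldr (· * ·) P₀ else 0

lemma _root_.List.prod_ofFn_eq_zero_of_mul_eq_zero {M : Type*} [MonoidWithZero M] {l : ℕ}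
    (g : Fin l → M) (i : ℕ) (hi : i + 1 < l) (h : g ⟨i, by omega⟩ * g ⟨i + 1, hi⟩ = 0) :
    (List.ofFn g).prod = 0 := by
  rw [← List.prod_take_mul_prod_drop (List.ofFn g) i,
    List.drop_eq_getElem_cons (by simp; omega), List.drop_eq_getElem_cons (by simp; omega),
    List.prod_cons, List.prod_cons, List.getElem_ofFn, List.getElem_ofFn, ← mul_assoc (g _), h,
    zero_mul, mul_zero]

lemma labelsMatch_top_iff {n k l : ℕ} (α : Fin k → Fin n) (β : Fin l → Fin n) :
    labelsMatch (⊤ : Partition k l) α β ↔ ∀ x y, Sum.elim α β x = Sum.elim α β y :=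
  ⟨fun h x y => h x y trivial, fun h x y _ => h x y⟩

lemma labelsMatch_top_two_two_left {n : ℕ} (γ : Fin 2 → Fin n) (b b' : Fin n) :
    labelsMatch (⊤ : Partition 2 2) γ ![b, b'] ↔ γ = (fun _ => b) ∧ b = b' := by
  simp only [labelsMatch_top_iff, Sum.forall, Fin.forall_fin_two, funext_iff, Sum.elim_inl,
    Sum.elim_inr, Matrix.cons_val_zero, Matrix.cons_val_one]
  grind

lemma labelsMatch_top_two_two_right {n : ℕ} (γ : Fin 2 → Fin n) (c c' : Fin n) :
    labelsMatch (⊤ : Partition 2 2) ![c, c'] γ ↔ γ = (fun _ => c) ∧ c = c' := by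
  simp only [labelsMatch_top_iff, Sum.forall, Fin.forall_fin_two, funext_iff, Sum.elim_inl,
    Sum.elim_inr, Matrix.cons_val_zero, Matrix.cons_val_one]
  grind

lemma SatisfiesRel.top_two_two {A : Type*} [Ring A] {n : ℕ} {u : Fin n → Fin n → A}
    (h : SatisfiesRel u (⊤ : Partition 2 2)) (b b' c c' : Fin n) :
    (if b = b' then u b c * u b c' else 0) = if c = c' then u b c * u b' c else 0 := by
  have key := h ![c, c'] ![b, b']
  simp only [labelsMatch_top_two_two_left, labelsMatch_top_two_two_right, ite_and,
    Finset.sum_ite_eq', Finset.mem_univ, if_true] at key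
  simpa [List.ofFn_succ, eq_comm] using key

lemma SatisfiesRel.mul_eq_zero_of_not_iff {A : Type*} [Ring A] {n : ℕ}
    {u : Fin n → Fin n → A} (h : SatisfiesRel u (⊤ : Partition 2 2)) {b b' c c' : Fin n}
    (hbc : ¬(b = b' ↔ c = c')) : u b c * u b' c' = 0 := by
  have key := h.top_two_two b b' c c'
  by_cases hb : b = b'
  · subst hb
    have hc : c ≠ c' := by simpa using hbc
    simpa [hc] using key
  · have hc : c = c' := by tauto
    subst hc
    simpa [hb] using key.symm

lemma labelsMatch_iff_le_ker {n k l : ℕ} (p : Partition k l) (α : Fin k → Fin n)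
    (β : Fin l → Fin n) : labelsMatch p α β ↔ p ≤ Setoid.ker (Sum.elim α β) :=
  Iff.rfl

lemma pairSetoid_le_iff {X : Type*} (x y : X) (s : Setoid X) :
    pairSetoid x y ≤ s ↔ s.r x y := by
  refine ⟨fun h => h (Or.inr (Or.inl ⟨rfl, rfl⟩)), fun h => ?_⟩
  rintro a b (rfl | ⟨rfl, rfl⟩ | ⟨rfl, rfl⟩)
  exacts [s.refl' a, h, s.symm' h]

lemma labelsMatch_mergeBlocks {n k l : ℕ} (p : Partition k l) (x y : Fin k ⊕ Fin l)
    (α : Fin k → Fin n) (β : Fin l → Fin n) :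
    labelsMatch (mergeBlocks p x y) α β ↔
      labelsMatch p α β ∧ Sum.elim α β x = Sum.elim α β y := by
  rw [labelsMatch_iff_le_ker, labelsMatch_iff_le_ker, mergeBlocks, sup_le_iff,
    pairSetoid_le_iff]
  rfl

lemma ite_labelsMatch_mergeBlocks {M : Type*} [Zero M] {n k l : ℕ} (p : Partition k l)
    (x y : Fin k ⊕ Fin l) (α : Fin k → Fin n) (β : Fin l → Fin n) (a : M) :
    (if labelsMatch (mergeBlocks p x y) α β then a else 0) =
      if Sum.elim α β x = Sum.elim α β y then (if labelsMatch p α β then a else 0) else 0 := by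
  rw [← ite_and]
  exact if_congr ((labelsMatch_mergeBlocks p x y α β).trans and_comm) rfl rfl

theorem satisfiesRel_mergeBlocks_general {A : Type*} [CStarAlgebra A] {n : ℕ}
    (u : Fin n → Fin n → A)
    (hfour : SatisfiesRel u (⊤ : Partition 2 2))
    {k l : ℕ} (p : Partition k l) (hp : SatisfiesRel u p)
    (j : Fin l) (hj : (j : ℕ) + 1 < l) :
    SatisfiesRel u (mergeBlocks p (Sum.inr j : Fin k ⊕ Fin l) (Sum.inr ⟨(j : ℕ) + 1, hj⟩)) := by
  set j' : Fin l := ⟨(j : ℕ) + 1, hj⟩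
  intro α β
  have hrhs (γ' : Fin l → Fin n) :
      (if labelsMatch (mergeBlocks p (Sum.inr j) (Sum.inr j')) α γ' then
        (List.ofFn fun t => u (β t) (γ' t)).prod else 0) =
      if β j = β j' then
        (if labelsMatch p α γ' then (List.ofFn fun t => u (β t) (γ' t)).prod else 0) else 0 := by
    have hzero (h : ¬(β j = β j' ↔ γ' j = γ' j')) :
        (List.ofFn fun t => u (β t) (γ' t)).prod = 0 :=
      List.prod_ofFn_eq_zero_of_mul_eq_zero _ j hj (hfour.mul_eq_zero_of_not_iff h)
    rw [ite_labelsMatch_mergeBlocks]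
    split_ifs <;> simp_all
  simp only [ite_labelsMatch_mergeBlocks, hrhs, Sum.elim_inr]
  split_ifs with hb <;> simp [hb, hp α β]

/-- Lemma B.2(c) (connecting neighbouring blocks, for a fixed representation,
self-adjoint case): given the relations `R(f)` of the four-block partition
`f ∈ P(2,2)` (the partition of `2+2` points with a single block), if the relations
`R(p)` hold and the `j`-th and `(j+1)`-th lower points of `p` lie in different blocks,
then the relations of the partition obtained by merging these two blocks hold. -/
theorem satisfiesRel_mergeBlocks {A : Type*} [CStarAlgebra A] {n : ℕ}
    (u : Fin n → Fin n → A) (hsa : ∀ i j, IsSelfAdjoint (u i j))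
    (hfour : SatisfiesRel u (⊤ : Partition 2 2))
    {k l : ℕ} (p : Partition k l) (hp : SatisfiesRel u p)
    (j : Fin l) (hj : (j : ℕ) + 1 < l)
    (hdiff : ¬ p.r (Sum.inr j : Fin k ⊕ Fin l) (Sum.inr ⟨(j : ℕ) + 1, hj⟩)) :
    SatisfiesRel u (mergeBlocks p (Sum.inr j : Fin k ⊕ Fin l) (Sum.inr ⟨(j : ℕ) + 1, hj⟩)) :=
  satisfiesRel_mergeBlocks_general u hfour p hp j hj

end PartitionCstar
end

section
/- (Lemma B.4(a), stated for a fixed representation in the self-adjoint case) Let A be a unital C*-algebra and u_{ij} ∈ A (1 ≤ i,j ≤ n) be self-adjoint, satisfying Σ_{m=1}^n u_{im}u_{jm} = δ_{ij}·1 and Σ_{m=1}^n u_{mi}u_{mj} = δ_{ij}·1 for all i,j. Let H ⊆ P be the set of all partitions p for which the relations R(p) hold for the u_{ij}. Then the partition s ∈ P(1,1) consisting of two singleton blocks (one upper singleton and one lower singleton) is NOT in H if and only if every block of every partition p ∈ H has at least two points. -/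
open scoped Classical

namespace PartitionCstar

/-! Orthogonality of the columns makes the reversed products `u_{β_w γ_w} ⋯ u_{β_1 γ_1}`
inverse to the forward products `u_{β_1 γ_1} ⋯ u_{β_w γ_w}` under contraction over the row
labels `β`. Contracting `R(p)` this way on all lower points except a lower singleton leaves a
single entry `u_{id}` whose column index `d` is free, while the upper side of `R(p)` does not
depend on the label `i` of the singleton: all row sums of `u` coincide. An upper singleton gives
the same for the column sums, since `R(p)` for `u` is `R(p*)` for the transpose. Orthogonality
then forces the common row sum `r` to satisfy `n r² = n`, hence `r² = 1`, and every column sum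
equals `r`, which is `R(s)`. -/

def IsSingletonBlock {X : Type*} (p : Setoid X) (x : X) : Prop :=
  ∀ y, p.r x y → y = x

section Labellings

variable {n k l : ℕ}

lemma labelsMatch_congr_of_isSingletonBlock {p : Partition k l} {x : Fin k ⊕ Fin l}
    (hx : IsSingletonBlock p x) {α α' : Fin k → Fin n} {β β' : Fin l → Fin n}
    (h : ∀ z, z ≠ x → Sum.elim α β z = Sum.elim α' β' z) :
    labelsMatch p α β ↔ labelsMatch p α' β' := by
  suffices key : ∀ (α α' : Fin k → Fin n) (β β' : Fin l → Fin n),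
      (∀ z, z ≠ x → Sum.elim α β z = Sum.elim α' β' z) →
        labelsMatch p α β → labelsMatch p α' β' from
    ⟨key α α' β β' h, key α' α β' β fun z hz => (h z hz).symm⟩
  intro α α' β β' h hm y z hyz
  by_cases hy : y = x
  · subst hy
    rw [hx z hyz]
  · have hz : z ≠ x := fun hz => hy (hx y (hz ▸ p.iseqv.symm hyz))
    rw [← h y hy, ← h z hz]
    exact hm y z hyz

lemma labelsMatch_const (p : Partition k l) (c : Fin n) :
    labelsMatch p (fun _ => c) (fun _ => c) := by
  rintro (_ | _) (_ | _) _ <;> rfl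

lemma labelsMatch_bot (α : Fin k → Fin n) (β : Fin l → Fin n) :
    labelsMatch (⊥ : Partition k l) α β := by
  rintro x y (rfl : x = y)
  rfl

lemma involution_rel {p : Partition k l} {x y : Fin l ⊕ Fin k} :
    (involution p).r x y ↔ p.r x.swap y.swap :=
  Iff.rfl

lemma labelsMatch_involution {p : Partition k l} {α : Fin l → Fin n} {β : Fin k → Fin n} :
    labelsMatch (involution p) α β ↔ labelsMatch p β α := by
  have elim_swap : ∀ z : Fin l ⊕ Fin k, Sum.elim α β z = Sum.elim β α z.swap := by
    rintro (_ | _) <;> rfl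
  refine ⟨fun h x y hxy => ?_, fun h x y hxy => ?_⟩
  · simpa [elim_swap] using h x.swap y.swap (by simpa [involution_rel] using hxy)
  · simpa [elim_swap] using h x.swap y.swap hxy

lemma isSingletonBlock_involution {p : Partition k l} {x : Fin k ⊕ Fin l}
    (hx : IsSingletonBlock p x) : IsSingletonBlock (involution p) x.swap := by
  intro y hy
  simpa using congrArg Sum.swap (hx y.swap (by simpa [involution_rel] using hy))

end Labellings

section Tuples

variable {α M : Type*}

lemma sum_fun_cons [Fintype α] [AddCommMonoid M] {w : ℕ} (g : (Fin (w + 1) → α) → M) :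
    ∑ β, g β = ∑ b, ∑ β, g (Fin.cons b β) := by
  rw [← (Fin.consEquiv fun _ => α).sum_comp, Fintype.sum_prod_type]
  rfl

lemma sum_fun_append [Fintype α] [AddCommMonoid M] {s t : ℕ} (g : (Fin (s + t) → α) → M) :
    ∑ β, g β = ∑ β₁, ∑ β₂, g (Fin.append β₁ β₂) := by
  rw [← (Fin.appendEquiv s t).sum_comp, Fintype.sum_prod_type]
  rfl

lemma append_cons_apply_of_ne {t r : ℕ} (βL : Fin t → α) (c c' : α) (βR : Fin r → α)
    {z : Fin (t + (r + 1))} (hz : z ≠ Fin.natAdd t 0) :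
    Fin.append βL (Fin.cons c βR) z = Fin.append βL (Fin.cons c' βR) z := by
  induction z using Fin.addCases with
  | left i => simp
  | right j =>
    cases j using Fin.cases with
    | zero => exact absurd rfl hz
    | succ j => simp

lemma append_cons_const {t r : ℕ} (c : α) :
    Fin.append (fun _ : Fin t => c) (Fin.cons c fun _ : Fin r => c) = fun _ => c := by
  funext z
  induction z using Fin.addCases with
  | left i => simp
  | right j => cases j using Fin.cases <;> simp

end Tuples

section EntryProducts

variable {A : Type*} [Ring A] {n : ℕ} (u : Fin n → Fin n → A)

def entryProd {w : ℕ} (β γ : Fin w → Fin n) : A :=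
  (List.ofFn fun s => u (β s) (γ s)).prod

def entryProdRev {w : ℕ} (β γ : Fin w → Fin n) : A :=
  (List.ofFn fun s => u (β s.rev) (γ s.rev)).prod

@[simp] lemma entryProd_cons {w : ℕ} (b c : Fin n) (β γ : Fin w → Fin n) :
    entryProd u (Fin.cons b β) (Fin.cons c γ) = u b c * entryProd u β γ := by
  simp [entryProd, List.ofFn_succ]

@[simp] lemma entryProdRev_cons {w : ℕ} (b c : Fin n) (β γ : Fin w → Fin n) :
    entryProdRev u (Fin.cons b β) (Fin.cons c γ) = entryProdRev u β γ * u b c := by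
  rw [entryProdRev, List.ofFn_succ', List.concat_eq_append, List.prod_append]
  simp [entryProdRev, Fin.rev_castSucc]

lemma entryProd_append {s t : ℕ} (β₁ γ₁ : Fin s → Fin n) (β₂ γ₂ : Fin t → Fin n) :
    entryProd u (Fin.append β₁ β₂) (Fin.append γ₁ γ₂) =
      entryProd u β₁ γ₁ * entryProd u β₂ γ₂ := by
  simp [entryProd, List.ofFn_add]

end EntryProducts

section ColumnOrthogonality

variable {A : Type*} [Ring A] {n : ℕ} (u : Fin n → Fin n → A)
  (hcolOrth : ∀ i j, ∑ m, u m i * u m j = if i = j then (1 : A) else 0)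
include hcolOrth

lemma sum_entryProdRev_mul_entryProd :
    ∀ {w : ℕ} (η γ : Fin w → Fin n),
      ∑ β, entryProdRev u β η * entryProd u β γ = if η = γ then 1 else 0
  | 0, η, γ => by simp [Subsingleton.elim η γ, entryProd, entryProdRev]
  | w + 1, η, γ => by
    obtain ⟨a, η, rfl⟩ : ∃ a η', η = Fin.cons a η' :=
      ⟨_, _, (Fin.cons_self_tail η).symm⟩
    obtain ⟨c, γ, rfl⟩ : ∃ c γ', γ = Fin.cons c γ' :=
      ⟨_, _, (Fin.cons_self_tail γ).symm⟩
    calc ∑ β, entryProdRev u β (Fin.cons a η) * entryProd u β (Fin.cons c γ)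
        = ∑ β, entryProdRev u β η * (∑ b, u b a * u b c) * entryProd u β γ := by
          simp only [sum_fun_cons, entryProdRev_cons, entryProd_cons]
          rw [Finset.sum_comm]
          simp only [Finset.mul_sum, Finset.sum_mul, mul_assoc]
      _ = _ := by
          by_cases h : a = c <;>
            simp [hcolOrth, h, Fin.cons_inj, sum_entryProdRev_mul_entryProd η γ]

lemma sum_entryProd_mul_entryProdRev :
    ∀ {w : ℕ} (γ η : Fin w → Fin n),
      ∑ β, entryProd u β γ * entryProdRev u β η = if γ = η then 1 else 0
  | 0, γ, η => by simp [Subsingleton.elim γ η, entryProd, entryProdRev]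
  | w + 1, γ, η => by
    obtain ⟨a, η, rfl⟩ : ∃ a η', η = Fin.cons a η' :=
      ⟨_, _, (Fin.cons_self_tail η).symm⟩
    obtain ⟨c, γ, rfl⟩ : ∃ c γ', γ = Fin.cons c γ' :=
      ⟨_, _, (Fin.cons_self_tail γ).symm⟩
    calc ∑ β, entryProd u β (Fin.cons c γ) * entryProdRev u β (Fin.cons a η)
        = ∑ b, u b c * (∑ β, entryProd u β γ * entryProdRev u β η) * u b a := by
          simp only [sum_fun_cons, entryProdRev_cons, entryProd_cons]
          simp only [Finset.mul_sum, Finset.sum_mul, mul_assoc]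
      _ = _ := by
          rw [sum_entryProd_mul_entryProdRev γ η]
          split_ifs with h <;> simp_all [Fin.cons_inj]

lemma sum_entryProdRev_mul_entryProd_append_cons_mul_entryProdRev {t r : ℕ}
    (ηL γL : Fin t → Fin n) (i d : Fin n) (γR ηR : Fin r → Fin n) :
    ∑ βL, ∑ βR, entryProdRev u βL ηL *
        entryProd u (Fin.append βL (Fin.cons i βR)) (Fin.append γL (Fin.cons d γR)) *
          entryProdRev u βR ηR =
      if ηL = γL ∧ γR = ηR then u i d else 0 := by
  calc _ = (∑ βL, entryProdRev u βL ηL * entryProd u βL γL) * u i d *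
        ∑ βR, entryProd u βR γR * entryProdRev u βR ηR := by
        simp only [Finset.mul_sum, Finset.sum_mul, entryProd_append, entryProd_cons, mul_assoc]
        exact Finset.sum_comm
    _ = _ := by
        rw [sum_entryProdRev_mul_entryProd u hcolOrth, sum_entryProd_mul_entryProdRev u hcolOrth]
        split_ifs <;> simp_all

lemma sum_entryProdRev_mul_sum_entryProd_mul_entryProdRev {t r : ℕ}
    (D : (Fin (t + (r + 1)) → Fin n) → Prop) (ηL : Fin t → Fin n) (ηR : Fin r → Fin n)
    (i : Fin n) :
    ∑ βL, ∑ βR, entryProdRev u βL ηL *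
        (∑ γ, if D γ then entryProd u (Fin.append βL (Fin.cons i βR)) γ else 0) *
          entryProdRev u βR ηR =
      ∑ d, if D (Fin.append ηL (Fin.cons d ηR)) then u i d else 0 := by
  calc _ = ∑ γ, ∑ βL, ∑ βR, if D γ then entryProdRev u βL ηL *
          entryProd u (Fin.append βL (Fin.cons i βR)) γ * entryProdRev u βR ηR else 0 := by
        simp only [Finset.mul_sum, Finset.sum_mul, mul_ite, ite_mul, mul_zero, zero_mul]
        exact (Finset.sum_congr rfl fun βL _ => Finset.sum_comm).trans Finset.sum_comm
    _ = ∑ γL, ∑ d, ∑ γR, if D (Fin.append γL (Fin.cons d γR)) then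
          (if ηL = γL ∧ γR = ηR then u i d else 0) else 0 := by
        rw [sum_fun_append]
        simp only [sum_fun_cons, Finset.sum_ite_irrel, Finset.sum_const_zero,
          sum_entryProdRev_mul_entryProd_append_cons_mul_entryProdRev u hcolOrth]
    _ = _ := by
        rw [Finset.sum_comm]
        refine Finset.sum_congr rfl fun d _ => ?_
        rw [Fintype.sum_eq_single ηL fun γL h => by simp [Ne.symm h],
          Fintype.sum_eq_single ηR fun γR h => by simp [h]]
        simp

lemma rowSum_eq_of_isSingletonBlock_inr {k l : ℕ} {p : Partition k l}
    (hp : SatisfiesRel u p) {τ : Fin l} (hτ : IsSingletonBlock p (Sum.inr τ)) (i j : Fin n) :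
    ∑ d, u i d = ∑ d, u j d := by
  obtain ⟨t, r, rfl, hτt⟩ : ∃ t r, l = t + (r + 1) ∧ (τ : ℕ) = t :=
    ⟨τ, l - τ - 1, by omega, rfl⟩
  obtain rfl : τ = Fin.natAdd t 0 := Fin.ext (by simp [hτt])
  set α : Fin k → Fin n := fun _ => j
  have agree_off_τ : ∀ (β : Fin t → Fin n) (c c' : Fin n) (β' : Fin r → Fin n)
      (α' : Fin k → Fin n) (z : Fin k ⊕ Fin (t + (r + 1))), z ≠ Sum.inr (Fin.natAdd t 0) →
      Sum.elim α' (Fin.append β (Fin.cons c β')) z =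
        Sum.elim α' (Fin.append β (Fin.cons c' β')) z := by
    rintro β c c' β' α' (z | z) hz
    · rfl
    · exact append_cons_apply_of_ne β c c' β' fun h => hz (congrArg Sum.inr h)
  have contract : ∀ c, ∑ βL, ∑ βR, entryProdRev u βL (fun _ => j) *
      (∑ γ, if labelsMatch p α γ then
        entryProd u (Fin.append βL (Fin.cons c βR)) γ else 0) *
          entryProdRev u βR (fun _ => j) = ∑ d, u c d := by
    intro c
    rw [sum_entryProdRev_mul_sum_entryProd_mul_entryProdRev u hcolOrth]
    refine Finset.sum_congr rfl fun d _ => if_pos ?_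
    rw [labelsMatch_congr_of_isSingletonBlock hτ (agree_off_τ _ d j _ α), append_cons_const]
    exact labelsMatch_const p j
  rw [← contract i, ← contract j]
  refine Finset.sum_congr rfl fun βL _ => Finset.sum_congr rfl fun βR _ => ?_
  have upper_side : ∀ c, (∑ γ, if labelsMatch p α γ then
      entryProd u (Fin.append βL (Fin.cons c βR)) γ else 0) =
        ∑ γ, if labelsMatch p γ (Fin.append βL (Fin.cons c βR)) then entryProd u γ α else 0 :=
    fun c => (hp α _).symm
  simp only [upper_side,
    labelsMatch_congr_of_isSingletonBlock hτ (agree_off_τ βL i j βR _)]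

end ColumnOrthogonality

lemma satisfiesRel_involution_transpose {A : Type*} [Ring A] {n k l : ℕ}
    {u : Fin n → Fin n → A} {p : Partition k l} (hp : SatisfiesRel u p) :
    SatisfiesRel (fun i j => u j i) (involution p) := fun α β => by
  simpa only [labelsMatch_involution] using (hp β α).symm

lemma colSum_eq_rowSum_of_rowSum_eq {A : Type*} [Ring A] [IsAddTorsionFree A] {n : ℕ}
    (u : Fin n → Fin n → A)
    (hcolOrth : ∀ i j, ∑ m, u m i * u m j = if i = j then (1 : A) else 0)
    (hrowSum : ∀ i j, ∑ d, u i d = ∑ d, u j d) (i j : Fin n) :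
    ∑ c, u c j = ∑ d, u i d := by
  set r := ∑ d, u i d
  have rowSum_eq : ∀ c, ∑ d, u c d = r := fun c => hrowSum c i
  have hr : r * r = 1 := by
    refine nsmul_right_injective i.pos.ne' ?_
    calc n • (r * r) = ∑ c, (∑ a, u c a) * ∑ b, u c b := by simp [rowSum_eq]
      _ = ∑ a, ∑ b, ∑ c, u c a * u c b := by
          simp only [Finset.sum_mul_sum]
          rw [Finset.sum_comm]
          exact Finset.sum_congr rfl fun a _ => Finset.sum_comm
      _ = n • (1 : A) := by simp [hcolOrth]
  have hcr : (∑ c, u c j) * r = 1 := by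
    calc (∑ c, u c j) * r = ∑ c, u c j * ∑ d, u c d := by
          simp only [Finset.sum_mul, rowSum_eq]
      _ = ∑ d, ∑ c, u c j * u c d := by
          simp only [Finset.mul_sum]
          exact Finset.sum_comm
      _ = 1 := by simp [hcolOrth]
  calc ∑ c, u c j = (∑ c, u c j) * (r * r) := by rw [hr, mul_one]
    _ = r := by rw [← mul_assoc, hcr, one_mul]

lemma colSum_eq_rowSum_of_isSingletonBlock {A : Type*} [Ring A] [IsAddTorsionFree A] {n : ℕ}
    (u : Fin n → Fin n → A)
    (hrowOrth : ∀ i j, ∑ m, u i m * u j m = if i = j then (1 : A) else 0)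
    (hcolOrth : ∀ i j, ∑ m, u m i * u m j = if i = j then (1 : A) else 0)
    {k l : ℕ} {p : Partition k l} (hp : SatisfiesRel u p) {x : Fin k ⊕ Fin l}
    (hx : IsSingletonBlock p x) (i j : Fin n) :
    ∑ c, u c j = ∑ d, u i d := by
  rcases x with σ | τ
  · have hσ := isSingletonBlock_involution hx
    exact (colSum_eq_rowSum_of_rowSum_eq (fun i j => u j i) hrowOrth
      (rowSum_eq_of_isSingletonBlock_inr (fun i j => u j i) hrowOrth
        (satisfiesRel_involution_transpose hp) hσ) j i).symm
  · exact colSum_eq_rowSum_of_rowSum_eq u hcolOrth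
      (rowSum_eq_of_isSingletonBlock_inr u hcolOrth hp hx) i j

lemma satisfiesRel_bot_iff {A : Type*} [Ring A] {n : ℕ} (u : Fin n → Fin n → A) :
    SatisfiesRel u (⊥ : Partition 1 1) ↔ ∀ i j, ∑ c, u c j = ∑ d, u i d := by
  have sum_fin_one : ∀ g : (Fin 1 → Fin n) → A, ∑ γ, g γ = ∑ c, g (fun _ => c) :=
    fun g => ((Equiv.funUnique (Fin 1) (Fin n)).symm.sum_comp g).symm
  simp only [SatisfiesRel, labelsMatch_bot, if_true, sum_fin_one, List.ofFn_succ,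
    List.ofFn_zero, List.prod_cons, List.prod_nil, mul_one]
  exact ⟨fun h i j => h (fun _ => j) (fun _ => i), fun h α β => h (β 0) (α 0)⟩

theorem not_satisfiesRel_doubleSingleton_iff_general {A : Type*} [CStarAlgebra A] {n : ℕ}
    (u : Fin n → Fin n → A)
    (hpair₁ : ∀ i j, (∑ m, u i m * u j m) = if i = j then (1 : A) else 0)
    (hpair₂ : ∀ i j, (∑ m, u m i * u m j) = if i = j then (1 : A) else 0) :
    (¬ SatisfiesRel u (⊥ : Partition 1 1)) ↔
      ∀ (k l : ℕ) (p : Partition k l), SatisfiesRel u p →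
        ∀ x : Fin k ⊕ Fin l, ∃ y : Fin k ⊕ Fin l, y ≠ x ∧ p.r x y := by
  have : IsAddTorsionFree A := .of_isTorsionFree ℂ A
  refine ⟨fun hs k l p hp x => ?_, fun h hs => ?_⟩
  · by_contra! hx
    refine hs ((satisfiesRel_bot_iff u).2 ?_)
    exact colSum_eq_rowSum_of_isSingletonBlock u hpair₁ hpair₂ hp
      (x := x) fun y hxy => by_contra fun hy => hx y hy hxy
  · obtain ⟨y, hy, hxy⟩ := h 1 1 ⊥ hs (Sum.inl 0)
    exact hy hxy.symm

/-- Lemma B.4(a) (for a fixed representation, self-adjoint case): given the pair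
relations, the double-singleton partition `s ∈ P(1,1)` (two singleton blocks, the
bottom `⊥` of the setoid lattice) does NOT satisfy the relations if and only if every
block of every partition satisfying the relations has at least two points. -/
theorem not_satisfiesRel_doubleSingleton_iff {A : Type*} [CStarAlgebra A] {n : ℕ}
    (u : Fin n → Fin n → A) (hsa : ∀ i j, IsSelfAdjoint (u i j))
    (hpair₁ : ∀ i j, (∑ m, u i m * u j m) = if i = j then (1 : A) else 0)
    (hpair₂ : ∀ i j, (∑ m, u m i * u m j) = if i = j then (1 : A) else 0) :
    (¬ SatisfiesRel u (⊥ : Partition 1 1)) ↔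
      ∀ (k l : ℕ) (p : Partition k l), SatisfiesRel u p →
        ∀ x : Fin k ⊕ Fin l, ∃ y : Fin k ⊕ Fin l, y ≠ x ∧ p.r x y :=
  not_satisfiesRel_doubleSingleton_iff_general u hpair₁ hpair₂

end PartitionCstar
end
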